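/- Every F-admissible F-space X is admissible: for every compact subset K of X and every neighborhood V of 0 in X, there exists a continuous map H : K → X with dim(span[H(K)]) < ∞ and x − H(x) ∈ V for every x ∈ K. -/

import Mathlib

open MeasureTheory Filter Topology

/-- An *F-admissible F-space* `X ⊆ L₀(T)` of `W`-valued measurable functions on a
σ-finite measure space `(T, Σ, μ)` (Definition 3.2 of the paper):
a complete F-space containing all simple functions with support of finite measure,
whose F-norm is monotone under pointwise norm domination, and satisfying
conditions (d), (e), (f) of the definition. -/
structure FAdmissibleSpace {T : Type*} [MeasurableSpace T] (μ : Measure T)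
    (W : Type*) [NormedAddCommGroup W] [NormedSpace ℝ W] where
  /-- The carrier `X ⊆ L₀(T)`. -/
  carrier : Set (T → W)
  /-- The F-norm `|·|_F`. -/
  Fn : (T → W) → ℝ
  zero_mem : 0 ∈ carrier
  add_mem : ∀ f g, f ∈ carrier → g ∈ carrier → f + g ∈ carrier
  smul_mem : ∀ (c : ℝ) f, f ∈ carrier → c • f ∈ carrier
  /-- Members of `X` are (a.e. strongly) measurable, i.e. `X ⊆ L₀(T)`. -/
  measurable_mem : ∀ f ∈ carrier, AEStronglyMeasurable f μ
  Fn_nonneg : ∀ f, 0 ≤ Fn f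
  /-- F-norm axiom (i) (on `L₀`, i.e. up to a.e. equality). -/
  Fn_eq_zero : ∀ f ∈ carrier, (Fn f = 0 ↔ f =ᵐ[μ] 0)
  /-- F-norm axiom (ii). -/
  Fn_neg : ∀ f, Fn (-f) = Fn f
  /-- F-norm axiom (iii): triangle inequality. -/
  Fn_add : ∀ f g, Fn (f + g) ≤ Fn f + Fn g
  /-- F-norm axiom (iv): joint continuity of scalar multiplication. -/
  Fn_smul : ∀ (f : T → W) (fs : ℕ → T → W) (c : ℝ) (cs : ℕ → ℝ),
      Tendsto (fun n => Fn (fs n - f)) atTop (𝓝 0) → Tendsto cs atTop (𝓝 c) →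
      Tendsto (fun n => Fn (cs n • fs n - c • f)) atTop (𝓝 0)
  /-- (b): simple functions with support of finite measure belong to `X`. -/
  simple_mem : ∀ s : SimpleFunc T W, μ (Function.support s) < ⊤ → ⇑s ∈ carrier
  /-- (c): monotonicity of the F-norm under pointwise norm domination. -/
  mono : ∀ (f g : T → W), AEStronglyMeasurable f μ → g ∈ carrier →
      (∀ᵐ t ∂μ, ‖f t‖ ≤ ‖g t‖) → f ∈ carrier ∧ Fn f ≤ Fn g
  /-- (d): `‖wₙ‖ → 0` implies `|wₙ χ_A|_F → 0` for `μ A < ∞`. -/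
  tendsto_const_indicator : ∀ (w : ℕ → W) (A : Set T), MeasurableSet A → μ A < ⊤ →
      Tendsto (fun n => ‖w n‖) atTop (𝓝 0) →
      Tendsto (fun n => Fn (A.indicator fun _ => w n)) atTop (𝓝 0)
  /-- (e): `|w χ_{Aₙ}|_F → 0` iff `μ Aₙ → 0`, for `w ≠ 0`. -/
  indicator_tendsto_iff : ∀ (A : ℕ → Set T), (∀ n, MeasurableSet (A n)) → ∀ w : W, w ≠ 0 →
      (Tendsto (fun n => Fn ((A n).indicator fun _ => w)) atTop (𝓝 0) ↔
        Tendsto (fun n => μ (A n)) atTop (𝓝 0))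
  /-- (f): dominated a.e. convergence implies F-norm convergence. -/
  dominated : ∀ (f : T → W) (fs : ℕ → T → W), f ∈ carrier → (∀ n, fs n ∈ carrier) →
      (∀ᵐ t ∂μ, Tendsto (fun n => fs n t) atTop (𝓝 (f t))) →
      (∀ n t, ‖fs n t‖ ≤ ‖f t‖) →
      Tendsto (fun n => Fn (fs n - f)) atTop (𝓝 0)
  /-- Completeness: `X` is a Fréchet space for the metric induced by the F-norm. -/
  complete : ∀ fs : ℕ → T → W, (∀ n, fs n ∈ carrier) →
      (∀ ε : ℝ, 0 < ε → ∃ N, ∀ p q, N ≤ p → N ≤ q → Fn (fs p - fs q) < ε) →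
      ∃ f ∈ carrier, Tendsto (fun n => Fn (fs n - f)) atTop (𝓝 0)

/-- A set `Z ⊆ X` is compact for the metric induced by the F-norm
(stated sequentially, which is equivalent in metric spaces). -/
def FAdmissibleSpace.IsCompactSet {T : Type*} [MeasurableSpace T] {μ : Measure T}
    {W : Type*} [NormedAddCommGroup W] [NormedSpace ℝ W]
    (X : FAdmissibleSpace μ W) (Z : Set (T → W)) : Prop :=
  ∀ g : ℕ → T → W, (∀ n, g n ∈ Z) →
    ∃ f ∈ Z, ∃ φ : ℕ → ℕ, StrictMono φ ∧
      Tendsto (fun k => X.Fn (g (φ k) - f)) atTop (𝓝 0)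

/-!
Uniformly on the compact set `K`, every `f` is close in `X` to `P f`, the radial truncation of
`f` at one level `M` restricted to one set `A` of finite measure. Take a finite `δ`-net `pᵢ` of
`K` and put `H f = ∑ cᵢ(f) • P pᵢ` with a continuous partition of unity `cᵢ` subordinate to the
`δ`-balls around the `pᵢ`. Although `X` need not be locally convex, on functions bounded by `2M`
and supported in `A` smallness in `X` is controlled by the `L¹` norm (Markov's inequality with
(d) and (e)), and `L¹` balls are convex. Conversely, closeness in `X` gives closeness in
measure, hence `L¹`-closeness of the truncations. So `P f - H f`, a convex combination of the
`L¹`-small functions `P f - P pᵢ`, is small in `X`.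
-/

open scoped ENNReal

section RadialTrunc

variable {W : Type*} [NormedAddCommGroup W] [NormedSpace ℝ W] {M : ℝ}

noncomputable def radialTrunc (M : ℝ) (x : W) : W := min 1 (M / ‖x‖) • x

lemma min_one_div_mul_self {r : ℝ} (hM : 0 ≤ M) (hr : 0 ≤ r) :
    min 1 (M / r) * r = min r M := by
  rw [min_mul_of_nonneg _ _ hr, one_mul]
  rcases eq_or_ne r 0 with rfl | hr0
  · simp [hM]
  · rw [div_mul_cancel₀ _ hr0]

lemma norm_radialTrunc (hM : 0 ≤ M) (x : W) : ‖radialTrunc M x‖ = min ‖x‖ M := by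
  rw [radialTrunc, norm_smul, Real.norm_of_nonneg (by positivity),
    min_one_div_mul_self hM (norm_nonneg _)]

lemma radialTrunc_eq_self {x : W} (hx : ‖x‖ ≤ M) : radialTrunc M x = x := by
  rcases eq_or_ne x 0 with rfl | hx0
  · simp [radialTrunc]
  · rw [radialTrunc, min_eq_left ((one_le_div (norm_pos_iff.2 hx0)).2 hx), one_smul]

lemma norm_sub_radialTrunc (hM : 0 ≤ M) (x : W) :
    ‖x - radialTrunc M x‖ = ‖x‖ - min ‖x‖ M := by
  have hc : min 1 (M / ‖x‖) ≤ 1 := min_le_left _ _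
  have hx : x - min 1 (M / ‖x‖) • x = (1 - min 1 (M / ‖x‖)) • x := by rw [sub_smul, one_smul]
  rw [radialTrunc, hx, norm_smul, Real.norm_of_nonneg (by linarith), sub_mul,
    one_mul, min_one_div_mul_self hM (norm_nonneg _)]

lemma norm_sub_radialTrunc_le (hM : 0 ≤ M) (x y : W) :
    ‖x - radialTrunc M x‖ ≤ ‖x - y‖ + ‖y - radialTrunc M y‖ := by
  rw [norm_sub_radialTrunc hM, norm_sub_radialTrunc hM]
  have hxy := norm_sub_norm_le x y
  rcases min_choice ‖x‖ M with hx | hx <;> rcases min_choice ‖y‖ M with hy | hy <;>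
    linarith [min_le_left ‖x‖ M, min_le_right ‖x‖ M, min_le_left ‖y‖ M, min_le_right ‖y‖ M,
      norm_nonneg (x - y)]

/-- In a general normed space the radial retraction is `2`-Lipschitz (not `1`-Lipschitz). -/
lemma lipschitzWith_radialTrunc (hM : 0 ≤ M) : LipschitzWith 2 (radialTrunc (W := W) M) := by
  suffices key : ∀ x y : W, ‖y‖ ≤ ‖x‖ → ‖radialTrunc M x - radialTrunc M y‖ ≤ 2 * ‖x - y‖ by
    refine LipschitzWith.of_dist_le_mul fun x y => ?_
    simp only [dist_eq_norm, NNReal.coe_ofNat]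
    rcases le_total ‖y‖ ‖x‖ with h | h
    · exact key x y h
    · rw [norm_sub_rev, norm_sub_rev x]; exact key y x h
  intro x y hyx
  rcases eq_or_ne y 0 with rfl | hy
  · rw [radialTrunc_eq_self (x := (0 : W)) (by simpa using hM), sub_zero, sub_zero,
      norm_radialTrunc hM]
    linarith [min_le_left ‖x‖ M, norm_nonneg x]
  set a := min 1 (M / ‖x‖)
  set b := min 1 (M / ‖y‖)
  have hab : a ≤ b := min_le_min le_rfl (div_le_div_of_nonneg_left hM (norm_pos_iff.2 hy) hyx)
  have hb1 : b ≤ 1 := min_le_left _ _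
  have ha0 : 0 ≤ a := le_min zero_le_one (by positivity)
  have hby : b * ‖y‖ ≤ a * ‖x‖ := by
    rw [min_one_div_mul_self hM (norm_nonneg _), min_one_div_mul_self hM (norm_nonneg _)]
    exact min_le_min hyx le_rfl
  have hdecomp : radialTrunc M x - radialTrunc M y = b • (x - y) - (b - a) • x := by
    simp only [radialTrunc, smul_sub, sub_smul]; abel
  calc ‖radialTrunc M x - radialTrunc M y‖ ≤ b * ‖x - y‖ + (b - a) * ‖x‖ := by
        rw [hdecomp]
        refine (norm_sub_le _ _).trans_eq ?_
        rw [norm_smul, norm_smul, Real.norm_of_nonneg (by linarith),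
          Real.norm_of_nonneg (by linarith)]
    _ ≤ b * ‖x - y‖ + b * (‖x‖ - ‖y‖) := by nlinarith
    _ ≤ 2 * ‖x - y‖ := by nlinarith [norm_sub_norm_le x y, norm_nonneg (x - y)]

end RadialTrunc

section TruncOn

variable {T : Type*} {W : Type*} [NormedAddCommGroup W] [NormedSpace ℝ W] {A : Set T} {M : ℝ}

noncomputable def truncOn (A : Set T) (M : ℝ) (f : T → W) : T → W :=
  A.indicator fun t => radialTrunc M (f t)

lemma norm_truncOn_le_norm (hM : 0 ≤ M) (f : T → W) (t : T) : ‖truncOn A M f t‖ ≤ ‖f t‖ :=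
  (norm_indicator_le_norm_self _ t).trans ((norm_radialTrunc hM _).trans_le (min_le_left _ _))

lemma norm_truncOn_le (hM : 0 ≤ M) (f : T → W) (t : T) : ‖truncOn A M f t‖ ≤ M :=
  (norm_indicator_le_norm_self _ t).trans ((norm_radialTrunc hM _).trans_le (min_le_right _ _))

lemma truncOn_of_notMem {t : T} (ht : t ∉ A) (f : T → W) : truncOn A M f t = 0 :=
  Set.indicator_of_notMem ht _

lemma norm_sub_truncOn_le (hM : 0 ≤ M) (f g : T → W) (t : T) :
    ‖f t - truncOn A M f t‖ ≤ ‖f t - g t‖ + ‖g t - truncOn A M g t‖ := by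
  by_cases ht : t ∈ A
  · simp only [truncOn, Set.indicator_of_mem ht]
    exact norm_sub_radialTrunc_le hM _ _
  · simp only [truncOn_of_notMem ht, sub_zero]
    exact norm_le_norm_sub_add _ _

lemma tendsto_truncOn_apply {A : ℕ → Set T} {M : ℕ → ℝ} (hA : ∀ t, ∀ᶠ n in atTop, t ∈ A n)
    (hM : Tendsto M atTop atTop) (f : T → W) (t : T) :
    Tendsto (fun n => truncOn (A n) (M n) f t) atTop (𝓝 (f t)) := by
  refine tendsto_const_nhds.congr' ?_
  filter_upwards [hA t, hM.eventually_ge_atTop ‖f t‖] with n htA htM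
  rw [truncOn, Set.indicator_of_mem htA, radialTrunc_eq_self htM]

protected lemma MeasureTheory.AEStronglyMeasurable.truncOn [MeasurableSpace T] {μ : Measure T}
    (hA : MeasurableSet A) (hM : 0 ≤ M) {f : T → W} (hf : AEStronglyMeasurable f μ) :
    AEStronglyMeasurable (truncOn A M f) μ :=
  ((lipschitzWith_radialTrunc hM).continuous.comp_aestronglyMeasurable hf).indicator hA

end TruncOn

section SchauderWeight

variable {ι : Type*} [Fintype ι] {r : ℝ} {ρ : ι → ℝ}

noncomputable def schauderWeight (r : ℝ) (ρ : ι → ℝ) (i : ι) : ℝ :=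
  max 0 (r - ρ i) / ∑ j, max 0 (r - ρ j)

lemma schauderWeight_nonneg (r : ℝ) (ρ : ι → ℝ) (i : ι) : 0 ≤ schauderWeight r ρ i :=
  div_nonneg (le_max_left _ _) (Finset.sum_nonneg fun _ _ => le_max_left _ _)

lemma sum_max_zero_sub_pos (h : ∃ i, ρ i < r) : 0 < ∑ j, max 0 (r - ρ j) := by
  obtain ⟨i, hi⟩ := h
  exact Finset.sum_pos' (fun _ _ => le_max_left _ _)
    ⟨i, Finset.mem_univ i, lt_max_of_lt_right (sub_pos.2 hi)⟩

lemma sum_schauderWeight (h : ∃ i, ρ i < r) : ∑ i, schauderWeight r ρ i = 1 := by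
  simp only [schauderWeight]
  rw [← Finset.sum_div, div_self (sum_max_zero_sub_pos h).ne']

lemma lt_of_schauderWeight_ne_zero {i : ι} (h : schauderWeight r ρ i ≠ 0) : ρ i < r := by
  by_contra! hi
  exact h (by simp [schauderWeight, max_eq_left (sub_nonpos.2 hi)])

lemma continuousAt_schauderWeight (h : ∃ i, ρ i < r) (i : ι) :
    ContinuousAt (fun ρ' => schauderWeight r ρ' i) ρ := by
  have hmax : ∀ j, Continuous fun ρ' : ι → ℝ => max 0 (r - ρ' j) := by fun_prop
  exact ((hmax i).continuousAt).div (continuous_finsetSum _ fun j _ => hmax j).continuousAt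
    (sum_max_zero_sub_pos h).ne'

end SchauderWeight

section Lintegral

variable {T : Type*} [MeasurableSpace T] {μ : Measure T}
  {W : Type*} [NormedAddCommGroup W] [NormedSpace ℝ W]

lemma lintegral_truncOn_sub_le {A : Set T} (hA : MeasurableSet A) {M : ℝ} (hM : 0 ≤ M)
    (f g : T → W) (β : ℝ) :
    ∫⁻ t, ‖truncOn A M f t - truncOn A M g t‖ₑ ∂μ ≤
      2 * ENNReal.ofReal M * μ {t | β < ‖f t - g t‖} + 2 * ENNReal.ofReal β * μ A := by
  set D := {t | β < ‖f t - g t‖}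
  have hpt : ∀ t, ‖truncOn A M f t - truncOn A M g t‖ₑ ≤
      D.indicator (fun _ => 2 * ENNReal.ofReal M) t +
        A.indicator (fun _ => 2 * ENNReal.ofReal β) t := by
    intro t
    by_cases htA : t ∈ A
    swap
    · simp [truncOn_of_notMem htA]
    by_cases htD : t ∈ D
    · rw [Set.indicator_of_mem htD, two_mul]
      refine le_add_right (enorm_sub_le.trans (add_le_add ?_ ?_)) <;>
        exact (ofReal_norm _).symm.trans_le (ENNReal.ofReal_le_ofReal (norm_truncOn_le hM _ t))
    · rw [Set.indicator_of_notMem htD, Set.indicator_of_mem htA, zero_add]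
      simp only [truncOn, Set.indicator_of_mem htA, ← edist_eq_enorm_sub]
      refine ((lipschitzWith_radialTrunc hM).edist_le_mul _ _).trans ?_
      rw [edist_eq_enorm_sub, ← ofReal_norm, ENNReal.coe_ofNat]
      exact mul_le_mul_right (ENNReal.ofReal_le_ofReal (not_lt.1 htD)) 2
  calc ∫⁻ t, ‖truncOn A M f t - truncOn A M g t‖ₑ ∂μ
      ≤ ∫⁻ t, (D.indicator (fun _ => 2 * ENNReal.ofReal M) t +
          A.indicator (fun _ => 2 * ENNReal.ofReal β) t) ∂μ := lintegral_mono hpt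
    _ = ∫⁻ t, D.indicator (fun _ => 2 * ENNReal.ofReal M) t ∂μ +
          ∫⁻ t, A.indicator (fun _ => 2 * ENNReal.ofReal β) t ∂μ :=
        lintegral_add_right _ (measurable_const.indicator hA)
    _ ≤ _ := add_le_add (lintegral_indicator_const_le _ _) (lintegral_indicator_const hA _).le

lemma lintegral_enorm_sub_sum_smul_le {ι : Type*} [Fintype ι] {g : T → W} {q : ι → T → W}
    {c : ι → ℝ} (hc0 : ∀ i, 0 ≤ c i) (hc1 : ∑ i, c i = 1) (hg : AEStronglyMeasurable g μ)
    (hq : ∀ i, AEStronglyMeasurable (q i) μ) {κ : ℝ≥0∞}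
    (hκ : ∀ i, c i ≠ 0 → ∫⁻ t, ‖g t - q i t‖ₑ ∂μ ≤ κ) :
    ∫⁻ t, ‖g t - (∑ i, c i • q i) t‖ₑ ∂μ ≤ κ := by
  have hsum : ∀ t, g t - (∑ i, c i • q i) t = ∑ i, c i • (g t - q i t) := by
    intro t
    simp [smul_sub, Finset.sum_sub_distrib, ← Finset.sum_smul, hc1]
  have hmeas : ∀ i, AEMeasurable (fun t => ‖g t - q i t‖ₑ) μ := fun i => (hg.sub (hq i)).enorm
  calc ∫⁻ t, ‖g t - (∑ i, c i • q i) t‖ₑ ∂μ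
      ≤ ∫⁻ t, ∑ i, ENNReal.ofReal (c i) * ‖g t - q i t‖ₑ ∂μ := lintegral_mono fun t => by
        rw [hsum]
        refine (enorm_sum_le _ _).trans (Finset.sum_le_sum fun i _ => ?_)
        rw [enorm_smul, Real.enorm_of_nonneg (hc0 i)]
    _ = ∑ i, ENNReal.ofReal (c i) * ∫⁻ t, ‖g t - q i t‖ₑ ∂μ := by
        rw [lintegral_finsetSum' _ fun i _ => (hmeas i).const_mul _]
        exact Finset.sum_congr rfl fun i _ => lintegral_const_mul'' _ (hmeas i)
    _ ≤ ∑ i, ENNReal.ofReal (c i) * κ := Finset.sum_le_sum fun i _ => by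
        rcases eq_or_ne (c i) 0 with h | h
        · simp [h]
        · exact mul_le_mul_right (hκ i h) _
    _ = κ := by
        rw [← Finset.sum_mul, ← ENNReal.ofReal_sum_of_nonneg fun i _ => hc0 i, hc1,
          ENNReal.ofReal_one, one_mul]

end Lintegral

namespace FAdmissibleSpace

variable {T : Type*} [MeasurableSpace T] {μ : Measure T}
  {W : Type*} [NormedAddCommGroup W] [NormedSpace ℝ W]
  (X : FAdmissibleSpace μ W)

def toSubmodule : Submodule ℝ (T → W) where
  carrier := X.carrier
  add_mem' := X.add_mem _ _
  zero_mem' := X.zero_mem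
  smul_mem' := X.smul_mem

lemma sub_mem {f g : T → W} (hf : f ∈ X.carrier) (hg : g ∈ X.carrier) : f - g ∈ X.carrier :=
  X.toSubmodule.sub_mem hf hg

lemma Fn_zero : X.Fn 0 = 0 :=
  (X.Fn_eq_zero 0 X.zero_mem).2 EventuallyEq.rfl

lemma Fn_sub_comm (f g : T → W) : X.Fn (f - g) = X.Fn (g - f) := by
  rw [← X.Fn_neg, neg_sub]

lemma Fn_sub_le (f g h : T → W) : X.Fn (f - h) ≤ X.Fn (f - g) + X.Fn (g - h) := by
  simpa using X.Fn_add (f - g) (g - h)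

lemma Fn_sum_le {ι : Type*} (s : Finset ι) (g : ι → T → W) :
    X.Fn (∑ i ∈ s, g i) ≤ ∑ i ∈ s, X.Fn (g i) :=
  Finset.le_sum_of_subadditive X.Fn X.Fn_zero.le X.Fn_add s g

lemma tendsto_Fn_sub_right {fs : ℕ → T → W} {f : T → W}
    (h : Tendsto (fun n => X.Fn (fs n - f)) atTop (𝓝 0)) (g : T → W) :
    Tendsto (fun n => X.Fn (fs n - g)) atTop (𝓝 (X.Fn (f - g))) := by
  refine tendsto_iff_norm_sub_tendsto_zero.2 (squeeze_zero (fun _ => norm_nonneg _) (fun n => ?_) h)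
  rw [Real.norm_eq_abs, abs_le]
  constructor <;> linarith [X.Fn_sub_le (fs n) f g, X.Fn_sub_le f (fs n) g, X.Fn_sub_comm f (fs n)]

lemma tendsto_Fn_sum_smul_sub {ι : Type*} [Fintype ι] (q : ι → T → W) {c : ι → ℝ}
    {cs : ℕ → ι → ℝ} (hc : ∀ i, Tendsto (fun n => cs n i) atTop (𝓝 (c i))) :
    Tendsto (fun n => X.Fn (∑ i, cs n i • q i - ∑ i, c i • q i)) atTop (𝓝 0) := by
  have hterm : ∀ i, Tendsto (fun n => X.Fn (cs n i • q i - c i • q i)) atTop (𝓝 0) :=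
    fun i => X.Fn_smul (q i) (fun _ => q i) (c i) (fun n => cs n i)
      (by simp [X.Fn_zero]) (hc i)
  refine squeeze_zero (fun _ => X.Fn_nonneg _) (fun n => ?_)
    (by simpa using tendsto_finsetSum Finset.univ fun i _ => hterm i)
  rw [← Finset.sum_sub_distrib]
  exact X.Fn_sum_le _ _

/-- Writing `h = (h - v) + v` with `v t` the radial truncation of `h t` at level `‖b t‖`
gives `‖v‖ ≤ ‖b‖` and `‖h - v‖ ≤ ‖a‖` pointwise. -/
lemma mono_add {h a b : T → W} (hh : AEStronglyMeasurable h μ) (ha : a ∈ X.carrier)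
    (hb : b ∈ X.carrier) (hle : ∀ᵐ t ∂μ, ‖h t‖ ≤ ‖a t‖ + ‖b t‖) :
    h ∈ X.carrier ∧ X.Fn h ≤ X.Fn a + X.Fn b := by
  set v : T → W := fun t => radialTrunc ‖b t‖ (h t)
  have hv : AEStronglyMeasurable v μ := by
    have hbm := (X.measurable_mem b hb).norm.aemeasurable
    exact (aemeasurable_const.min (hbm.div hh.norm.aemeasurable)).aestronglyMeasurable.smul hh
  obtain ⟨hvX, hvFn⟩ := X.mono v b hv hb <| Eventually.of_forall fun t =>
    (norm_radialTrunc (norm_nonneg _) _).trans_le (min_le_right _ _)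
  obtain ⟨huX, huFn⟩ := X.mono (h - v) a (hh.sub hv) ha <| hle.mono fun t ht => by
    rw [Pi.sub_apply, norm_sub_radialTrunc (norm_nonneg _)]
    rcases min_choice ‖h t‖ ‖b t‖ with hm | hm <;> rw [hm] <;> linarith [norm_nonneg (a t)]
  rw [← sub_add_cancel h v]
  exact ⟨X.add_mem _ _ huX hvX, (X.Fn_add _ _).trans (add_le_add huFn hvFn)⟩

lemma indicator_const_mem {A : Set T} (hA : MeasurableSet A) (hAfin : μ A < ⊤) (w : W) :
    A.indicator (fun _ => w) ∈ X.carrier := by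
  have h := X.simple_mem ((SimpleFunc.const T w).restrict A) ?_
  · rwa [SimpleFunc.coe_restrict _ hA, SimpleFunc.coe_const] at h
  · rw [SimpleFunc.coe_restrict _ hA]
    exact (measure_mono Set.support_indicator_subset).trans_lt hAfin

lemma truncOn_mem {A : Set T} (hA : MeasurableSet A) {M : ℝ} (hM : 0 ≤ M) {f : T → W}
    (hf : f ∈ X.carrier) : truncOn A M f ∈ X.carrier :=
  (X.mono _ f ((X.measurable_mem f hf).truncOn hA hM) hf
    (Eventually.of_forall (norm_truncOn_le_norm hM f))).1

variable {K : Set (T → W)}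

lemma exists_finite_net (hKc : X.IsCompactSet K) {r : ℝ} (hr : 0 < r) :
    ∃ (m : ℕ) (p : Fin m → T → W), (∀ i, p i ∈ K) ∧ ∀ f ∈ K, ∃ i, X.Fn (f - p i) < r := by
  obtain ⟨s, hsK, hs⟩ : ∃ s : Finset (T → W), (∀ g ∈ s, g ∈ K) ∧
      ∀ f ∈ K, ∃ g ∈ s, X.Fn (f - g) < r := by
    by_contra! h
    obtain ⟨g, hgK, hsep⟩ :=
      exists_seq_of_forall_finset_exists (· ∈ K) (fun g f => r ≤ X.Fn (f - g)) h
    obtain ⟨f, -, φ, hφ, hconv⟩ := hKc g hgK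
    obtain ⟨N, hN⟩ := eventually_atTop.1 (hconv.eventually_lt_const (half_pos hr))
    linarith [hsep _ _ (hφ N.lt_succ_self), X.Fn_sub_le (g (φ (N + 1))) f (g (φ N)),
      X.Fn_sub_comm f (g (φ N)), hN N le_rfl, hN (N + 1) N.le_succ]
  refine ⟨s.card, fun i => s.equivFin.symm i, fun i => hsK _ (s.equivFin.symm i).2,
    fun f hf => ?_⟩
  obtain ⟨g, hg, hfg⟩ := hs f hf
  exact ⟨s.equivFin ⟨g, hg⟩, by simpa using hfg⟩

/-- Equicontinuity (`hD_le`) upgrades pointwise convergence to uniform convergence on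
compact sets. -/
lemma exists_forall_Fn_lt_of_tendsto (hK : K ⊆ X.carrier) (hKc : X.IsCompactSet K)
    {D : ℕ → (T → W) → T → W} (hD_mem : ∀ n, ∀ f ∈ X.carrier, D n f ∈ X.carrier)
    (hD_le : ∀ n f g t, ‖D n f t‖ ≤ ‖f t - g t‖ + ‖D n g t‖)
    (hD_lim : ∀ f ∈ K, Tendsto (fun n => X.Fn (D n f)) atTop (𝓝 0)) {ε : ℝ} (hε : 0 < ε) :
    ∃ n, ∀ f ∈ K, X.Fn (D n f) < ε := by
  by_contra! h
  choose f hfK hf using h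
  obtain ⟨f₀, hf₀K, φ, hφ, hconv⟩ := hKc f hfK
  have hlim : Tendsto (fun k => X.Fn (f (φ k) - f₀) + X.Fn (D (φ k) f₀)) atTop (𝓝 0) := by
    simpa using hconv.add ((hD_lim f₀ hf₀K).comp hφ.tendsto_atTop)
  obtain ⟨k, hk⟩ := (hlim.eventually_lt_const hε).exists
  have hsplit := X.mono_add (X.measurable_mem _ (hD_mem (φ k) _ (hK (hfK (φ k)))))
    (X.sub_mem (hK (hfK (φ k))) (hK hf₀K)) (hD_mem (φ k) _ (hK hf₀K))
    (Eventually.of_forall fun t => hD_le (φ k) (f (φ k)) f₀ t)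
  linarith [hf (φ k), hsplit.2]

lemma exists_Fn_sub_truncOn_lt [SigmaFinite μ] (hK : K ⊆ X.carrier) (hKc : X.IsCompactSet K)
    {ε : ℝ} (hε : 0 < ε) :
    ∃ n : ℕ, ∀ f ∈ K, X.Fn (f - truncOn (spanningSets μ n) (n + 1) f) < ε := by
  have hM : ∀ n : ℕ, (0 : ℝ) ≤ n + 1 := fun n => by positivity
  have hmem : ∀ n, ∀ f ∈ X.carrier, truncOn (spanningSets μ n) (n + 1) f ∈ X.carrier :=
    fun n f hf => X.truncOn_mem (measurableSet_spanningSets μ n) (hM n) hf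
  refine X.exists_forall_Fn_lt_of_tendsto hK hKc (fun n f hf => X.sub_mem hf (hmem n f hf))
    (fun n f g t => norm_sub_truncOn_le (hM n) f g t) (fun f hf => ?_) hε
  have hpt := tendsto_truncOn_apply
    (fun t => eventually_atTop.2 ⟨_, fun n hn => mem_spanningSets_of_index_le μ t hn⟩)
    (tendsto_atTop_mono (fun n => le_add_of_nonneg_right zero_le_one)
      tendsto_natCast_atTop_atTop) f
  simpa only [X.Fn_sub_comm f] using X.dominated f _ (hK hf) (fun n => hmem n f (hK hf))
    (Eventually.of_forall hpt) (fun n => norm_truncOn_le_norm (hM n) f)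

lemma exists_Fn_indicator_lt_of_norm_le {A : Set T} (hA : MeasurableSet A) (hAfin : μ A < ⊤)
    {ε : ℝ} (hε : 0 < ε) :
    ∃ l > 0, ∀ w : W, ‖w‖ ≤ l → X.Fn (A.indicator fun _ => w) < ε := by
  by_contra! h
  choose w hw hwε using fun n : ℕ => h (1 / (n + 1)) Nat.one_div_pos_of_nat
  have hw0 : Tendsto (fun n => ‖w n‖) atTop (𝓝 0) :=
    squeeze_zero (fun _ => norm_nonneg _) hw tendsto_one_div_add_atTop_nhds_zero_nat
  obtain ⟨n, hn⟩ := ((X.tendsto_const_indicator w A hA hAfin hw0).eventually_lt_const hε).exists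
  exact (hwε n).not_gt hn

lemma exists_Fn_indicator_lt_of_measure_lt {w : W} (hw : w ≠ 0) {ε : ℝ} (hε : 0 < ε) :
    ∃ η > 0, ∀ B, MeasurableSet B → μ B < η → X.Fn (B.indicator fun _ => w) < ε := by
  by_contra! h
  choose B hB hBμ hBε using fun n : ℕ => h (n : ℝ≥0∞)⁻¹ (ENNReal.inv_pos.2 (by simp))
  have hμ : Tendsto (fun n => μ (B n)) atTop (𝓝 0) :=
    tendsto_of_tendsto_of_tendsto_of_le_of_le tendsto_const_nhds
      ENNReal.tendsto_inv_nat_nhds_zero (fun _ => zero_le) fun n => (hBμ n).le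
  obtain ⟨n, hn⟩ := (((X.indicator_tendsto_iff B hB w hw).2 hμ).eventually_lt_const hε).exists
  exact (hBε n).not_gt hn

lemma exists_measure_lt_of_Fn_lt {β : ℝ} (hβ : 0 < β) {η : ℝ≥0∞} (hη : 0 < η) :
    ∃ δ > 0, ∀ h ∈ X.carrier, X.Fn h < δ → μ {t | β < ‖h t‖} < η := by
  rcases subsingleton_or_nontrivial W with hW | hW
  · refine ⟨1, one_pos, fun h _ _ => ?_⟩
    simpa [Subsingleton.elim _ (0 : W), hβ.not_gt] using hη
  obtain ⟨w, hw⟩ := exists_norm_eq W hβ.le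
  by_contra! hcon
  choose h hhX hhFn hhμ using fun n : ℕ => hcon (1 / (n + 1)) Nat.one_div_pos_of_nat
  set C := fun n => toMeasurable μ {t | β < ‖h n t‖}
  have hC : ∀ n, MeasurableSet (C n) := fun n => measurableSet_toMeasurable _ _
  have hC_ae : ∀ n, C n =ᵐ[μ] {t | β < ‖h n t‖} := fun n =>
    (nullMeasurableSet_lt aemeasurable_const
      (X.measurable_mem _ (hhX n)).norm.aemeasurable).toMeasurable_ae_eq
  have hdom : ∀ n, X.Fn ((C n).indicator fun _ => w) ≤ X.Fn (h n) := fun n =>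
    (X.mono _ _ (aestronglyMeasurable_const.indicator (hC n)) (hhX n) <| by
      filter_upwards [hC_ae n] with t ht
      by_cases htC : t ∈ C n
      · rw [Set.indicator_of_mem htC, hw]
        exact le_of_lt (show t ∈ {t | β < ‖h n t‖} from ht.mp htC)
      · rw [Set.indicator_of_notMem htC, norm_zero]
        exact norm_nonneg _).2
  have hFn : Tendsto (fun n => X.Fn ((C n).indicator fun _ => w)) atTop (𝓝 0) :=
    squeeze_zero (fun _ => X.Fn_nonneg _) (fun n => (hdom n).trans (hhFn n).le)
      tendsto_one_div_add_atTop_nhds_zero_nat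
  have hw0 : w ≠ 0 := by rw [← norm_ne_zero_iff, hw]; exact hβ.ne'
  obtain ⟨n, hn⟩ := (((X.indicator_tendsto_iff C hC w hw0).1 hFn).eventually_lt_const hη).exists
  exact (hhμ n).not_gt (by rwa [measure_toMeasurable] at hn)

variable {A : Set T}

/-- By Markov's inequality `h` is at most `l 𝟙_A` off a set `E` of small measure, and at most
`C 𝟙_E` on it; conditions (d) and (e) make both of these small in `X`. -/
lemma exists_Fn_lt_of_lintegral_le (hA : MeasurableSet A) (hAfin : μ A < ⊤) {C : ℝ}
    (hC : 0 < C) {ε : ℝ} (hε : 0 < ε) :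
    ∃ κ > 0, ∀ h : T → W, AEStronglyMeasurable h μ → (∀ t, ‖h t‖ ≤ C) →
      (∀ t ∉ A, h t = 0) → ∫⁻ t, ‖h t‖ₑ ∂μ ≤ κ → h ∈ X.carrier ∧ X.Fn h < ε := by
  rcases subsingleton_or_nontrivial W with hW | hW
  · refine ⟨1, one_pos, fun h _ _ _ _ => ?_⟩
    rw [Subsingleton.elim h 0, X.Fn_zero]
    exact ⟨X.zero_mem, hε⟩
  obtain ⟨l, hl, hlA⟩ := X.exists_Fn_indicator_lt_of_norm_le hA hAfin (half_pos hε)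
  obtain ⟨wl, hwl⟩ := exists_norm_eq W hl.le
  obtain ⟨wC, hwC⟩ := exists_norm_eq W hC.le
  have hwC0 : wC ≠ 0 := by rw [← norm_ne_zero_iff, hwC]; exact hC.ne'
  obtain ⟨η₀, hη₀, hη₀ε⟩ := X.exists_Fn_indicator_lt_of_measure_lt hwC0 (half_pos hε)
  obtain ⟨η, hη, hηη₀⟩ := exists_between hη₀
  have hl' : ENNReal.ofReal l ≠ 0 := by simpa using hl
  refine ⟨ENNReal.ofReal l * η, ENNReal.mul_pos hl' hη.ne', fun h hh hhC hhA hint => ?_⟩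
  set S := {t | ENNReal.ofReal l ≤ ‖h t‖ₑ}
  have hS : μ S ≤ η := (ENNReal.mul_le_mul_iff_right hl' ENNReal.ofReal_ne_top).1
    ((mul_meas_ge_le_lintegral₀ hh.enorm _).trans hint)
  set E := toMeasurable μ S
  have hE : MeasurableSet E := measurableSet_toMeasurable μ S
  have hμE : μ E < η₀ := by rw [measure_toMeasurable]; exact hS.trans_lt hηη₀
  have hdom : ∀ t, ‖h t‖ ≤ ‖A.indicator (fun _ => wl) t‖ + ‖E.indicator (fun _ => wC) t‖ := by
    intro t
    by_cases htS : t ∈ S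
    · rw [Set.indicator_of_mem (subset_toMeasurable μ S htS), hwC]
      linarith [hhC t, norm_nonneg (A.indicator (fun _ => wl) t)]
    by_cases htA : t ∈ A
    · have hlt : ‖h t‖ < l := by
        simpa [S, ← ofReal_norm, ENNReal.ofReal_le_ofReal_iff', hl.not_ge] using htS
      rw [Set.indicator_of_mem htA, hwl]
      linarith [norm_nonneg (E.indicator (fun _ => wC) t)]
    · simp only [hhA t htA, norm_zero]
      positivity
  obtain ⟨hX, hFn⟩ := X.mono_add hh (X.indicator_const_mem hA hAfin wl)
    (X.indicator_const_mem hE (hμE.trans_le le_top) wC) (Eventually.of_forall hdom)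
  exact ⟨hX, by linarith [hlA wl hwl.le, hη₀ε E hE hμE]⟩

lemma exists_lintegral_truncOn_sub_lt (hA : MeasurableSet A) (hAfin : μ A < ⊤) {M : ℝ}
    (hM : 0 ≤ M) {κ : ℝ≥0∞} (hκ : 0 < κ) :
    ∃ δ > 0, ∀ f ∈ X.carrier, ∀ g ∈ X.carrier, X.Fn (f - g) < δ →
      ∫⁻ t, ‖truncOn A M f t - truncOn A M g t‖ₑ ∂μ < κ := by
  have hκ2 : κ / 2 ≠ 0 := (ENNReal.half_pos hκ.ne').ne'
  obtain ⟨β, hβ, hβκ⟩ := ENNReal.exists_nnreal_pos_mul_lt (a := 2 * μ A) (by finiteness) hκ2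
  obtain ⟨η, hη, hηκ⟩ :=
    ENNReal.exists_nnreal_pos_mul_lt (a := 2 * ENNReal.ofReal M) (by finiteness) hκ2
  obtain ⟨δ, hδ, hδμ⟩ := X.exists_measure_lt_of_Fn_lt (μ := μ) (NNReal.coe_pos.2 hβ)
    (ENNReal.coe_pos.2 hη)
  refine ⟨δ, hδ, fun f hf g hg hfg => ?_⟩
  calc ∫⁻ t, ‖truncOn A M f t - truncOn A M g t‖ₑ ∂μ
      ≤ 2 * ENNReal.ofReal M * μ {t | (β : ℝ) < ‖(f - g) t‖} +
          2 * ENNReal.ofReal β * μ A := lintegral_truncOn_sub_le hA hM f g β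
    _ < κ / 2 + κ / 2 := by
        gcongr ?_ + ?_
        · calc 2 * ENNReal.ofReal M * μ {t | (β : ℝ) < ‖(f - g) t‖}
              ≤ 2 * ENNReal.ofReal M * η := by gcongr; exact (hδμ _ (X.sub_mem hf hg) hfg).le
            _ < κ / 2 := by rwa [mul_comm]
        · rwa [ENNReal.ofReal_coe_nnreal, mul_comm 2, mul_assoc]
    _ = κ := ENNReal.add_halves κ

section SchauderProj

variable {ι : Type*} [Fintype ι]

noncomputable def schauderProj (r : ℝ) (p q : ι → T → W) (f : T → W) : T → W :=
  ∑ i, schauderWeight r (fun j => X.Fn (f - p j)) i • q i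

lemma schauderProj_mem {r : ℝ} (p : ι → T → W) {q : ι → T → W} (hq : ∀ i, q i ∈ X.carrier)
    (f : T → W) : X.schauderProj r p q f ∈ X.carrier :=
  X.toSubmodule.sum_mem fun i _ => X.toSubmodule.smul_mem _ (hq i)

lemma schauderProj_mem_span (r : ℝ) (p q : ι → T → W) (f : T → W) :
    X.schauderProj r p q f ∈ Submodule.span ℝ (Set.range q) :=
  Submodule.sum_mem _ fun i _ => Submodule.smul_mem _ _ (Submodule.subset_span ⟨i, rfl⟩)

lemma tendsto_Fn_schauderProj_sub {r : ℝ} {p : ι → T → W} (q : ι → T → W) {f : T → W}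
    (hf : ∃ i, X.Fn (f - p i) < r) {fs : ℕ → T → W}
    (hfs : Tendsto (fun n => X.Fn (fs n - f)) atTop (𝓝 0)) :
    Tendsto (fun n => X.Fn (X.schauderProj r p q (fs n) - X.schauderProj r p q f)) atTop (𝓝 0) :=
  X.tendsto_Fn_sum_smul_sub q fun i => (continuousAt_schauderWeight hf i).tendsto.comp
    (tendsto_pi_nhds.2 fun j => X.tendsto_Fn_sub_right hfs (p j))

end SchauderProj

lemma exists_Fn_truncOn_sub_schauderProj_lt {A : Set T} (hA : MeasurableSet A)
    (hAfin : μ A < ⊤) {M : ℝ} (hM : 0 < M) {ε : ℝ} (hε : 0 < ε) :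
    ∃ δ > 0, ∀ {ι : Type*} [Fintype ι] (p : ι → T → W), (∀ i, p i ∈ X.carrier) →
      ∀ f ∈ X.carrier, (∃ i, X.Fn (f - p i) < δ) →
        X.Fn (truncOn A M f - X.schauderProj δ p (fun i => truncOn A M (p i)) f) < ε := by
  obtain ⟨κ, hκ, hκX⟩ := X.exists_Fn_lt_of_lintegral_le hA hAfin (by positivity : 0 < 2 * M) hε
  obtain ⟨δ, hδ, hδκ⟩ := X.exists_lintegral_truncOn_sub_lt hA hAfin hM.le hκ
  refine ⟨δ, hδ, fun p hp f hf hfp => ?_⟩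
  set c := schauderWeight δ fun j => X.Fn (f - p j)
  have hc0 : ∀ i, 0 ≤ c i := schauderWeight_nonneg _ _
  have hc1 : ∑ i, c i = 1 := sum_schauderWeight hfp
  have hq : ∀ i, truncOn A M (p i) ∈ X.carrier := fun i => X.truncOn_mem hA hM.le (hp i)
  have hPf := X.truncOn_mem hA hM.le hf
  have hHM : ∀ t, ‖X.schauderProj δ p (fun i => truncOn A M (p i)) f t‖ ≤ M := fun t => by
    rw [schauderProj, Finset.sum_apply, ← mem_closedBall_zero_iff]
    exact (convex_closedBall 0 M).sum_mem (fun i _ => hc0 i) hc1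
      fun i _ => mem_closedBall_zero_iff.2 (norm_truncOn_le hM.le _ t)
  refine (hκX _ (X.measurable_mem _ (X.sub_mem hPf (X.schauderProj_mem p hq f)))
    (fun t => (norm_sub_le _ _).trans (by linarith [norm_truncOn_le (A := A) hM.le f t, hHM t]))
    (fun t ht => by simp [schauderProj, truncOn_of_notMem ht])
    (lintegral_enorm_sub_sum_smul_le hc0 hc1 (X.measurable_mem _ hPf)
      (fun i => X.measurable_mem _ (hq i)) fun i hi => ?_)).2
  exact (hδκ f hf (p i) (hp i) (lt_of_schauderWeight_ne_zero (ρ := fun j => X.Fn (f - p j)) hi)).le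

end FAdmissibleSpace

theorem fAdmissibleSpace_admissible_general
    {T : Type*} [MeasurableSpace T] (μ : Measure T) [SigmaFinite μ]
    {W : Type*} [NormedAddCommGroup W] [NormedSpace ℝ W]
    (X : FAdmissibleSpace μ W) :
    ∀ K : Set (T → W), K ⊆ X.carrier → X.IsCompactSet K →
      ∀ ε : ℝ, 0 < ε →
        ∃ H : (T → W) → (T → W),
          (∀ f ∈ K, H f ∈ X.carrier) ∧
          -- `H` is continuous on `K` for the metric induced by the F-norm:
          (∀ f ∈ K, ∀ fs : ℕ → T → W, (∀ n, fs n ∈ K) →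
            Tendsto (fun n => X.Fn (fs n - f)) atTop (𝓝 0) →
            Tendsto (fun n => X.Fn (H (fs n) - H f)) atTop (𝓝 0)) ∧
          -- `span [H(K)]` is finite dimensional:
          (∃ (m : ℕ) (v : Fin m → T → W),
            ∀ f ∈ K, H f ∈ Submodule.span ℝ (Set.range v)) ∧
          -- `f − H(f)` lies in the `ε`-neighborhood of `0`:
          (∀ f ∈ K, X.Fn (f - H f) < ε) := by
  intro K hK hKc ε hε
  obtain ⟨n, hn⟩ := X.exists_Fn_sub_truncOn_lt hK hKc (half_pos hε)
  set A := spanningSets μ n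
  set M : ℝ := n + 1
  have hA : MeasurableSet A := measurableSet_spanningSets μ n
  have hM : 0 < M := by positivity
  obtain ⟨δ, hδ, hδε⟩ := X.exists_Fn_truncOn_sub_schauderProj_lt hA
    (measure_spanningSets_lt_top μ n) hM (half_pos hε)
  obtain ⟨m, p, hpK, hnet⟩ := X.exists_finite_net hKc hδ
  set q : Fin m → T → W := fun i => truncOn A M (p i)
  refine ⟨X.schauderProj δ p q,
    fun f _ => X.schauderProj_mem p (fun i => X.truncOn_mem hA hM.le (hK (hpK i))) f,
    fun f hf fs _ hfs => X.tendsto_Fn_schauderProj_sub q (hnet f hf) hfs,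
    ⟨m, q, fun f _ => X.schauderProj_mem_span δ p q f⟩, fun f hf => ?_⟩
  have hPH := hδε p (fun i => hK (hpK i)) f (hK hf) (hnet f hf)
  linarith [X.Fn_sub_le f (truncOn A M f) (X.schauderProj δ p q f), hn f hf]

/-- Theorem 4.1, the main theorem of the paper. Every F-admissible
F-space is admissible in the sense of Klee: for every compact `K ⊆ X` and every `ε > 0`
(neighborhoods of `0` in the metric induced by the F-norm being the balls), there is a
continuous map `H : K → X` with finite-dimensional span of its image such that
`|f − H(f)|_F < ε` for every `f ∈ K`. -/
theorem fAdmissibleSpace_admissible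
    {T : Type*} [MeasurableSpace T] (μ : Measure T) [SigmaFinite μ]
    {W : Type*} [NormedAddCommGroup W] [NormedSpace ℝ W] [CompleteSpace W]
    (X : FAdmissibleSpace μ W) :
    ∀ K : Set (T → W), K ⊆ X.carrier → X.IsCompactSet K →
      ∀ ε : ℝ, 0 < ε →
        ∃ H : (T → W) → (T → W),
          (∀ f ∈ K, H f ∈ X.carrier) ∧
          -- `H` is continuous on `K` for the metric induced by the F-norm:
          (∀ f ∈ K, ∀ fs : ℕ → T → W, (∀ n, fs n ∈ K) →
            Tendsto (fun n => X.Fn (fs n - f)) atTop (𝓝 0) →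
            Tendsto (fun n => X.Fn (H (fs n) - H f)) atTop (𝓝 0)) ∧
          -- `span [H(K)]` is finite dimensional:
          (∃ (m : ℕ) (v : Fin m → T → W),
            ∀ f ∈ K, H f ∈ Submodule.span ℝ (Set.range v)) ∧
          -- `f − H(f)` lies in the `ε`-neighborhood of `0`:
          (∀ f ∈ K, X.Fn (f - H f) < ε) :=
  fAdmissibleSpace_admissible_general μ X
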